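/- Let G be a subgraph of a fullerene graph F with k pentagonal faces, and let 𝓗 be a Clar set of the hexagon extension H[G]. Then |U_𝓗(G)| ≥ k. -/

import Mathlib

namespace FG

/-- A combinatorial plane (spherically embedded) graph: a finite simple graph together with
its collection of faces, each face recorded as the finset of edges of its boundary cycle.
Every face boundary is a cycle, every edge lies on exactly two faces, and Euler's formula
holds (edges are counted via the face incidences). -/
structure PlaneGraph (V : Type) [Fintype V] [DecidableEq V] : Type where
  graph : SimpleGraph V
  faces : Finset (Finset (Sym2 V))
  face_edges : ∀ f ∈ faces, ∀ e ∈ f, e ∈ graph.edgeSet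
  face_cycle : ∀ f ∈ faces, ∃ (v : V) (c : graph.Walk v v), c.IsCycle ∧ c.edges.toFinset = f
  edge_faces : ∀ e ∈ graph.edgeSet, (faces.filter (fun f => e ∈ f)).card = 2
  euler : 2 * (Fintype.card V + faces.card) = (∑ f ∈ faces, f.card) + 4

variable {V : Type} [Fintype V] [DecidableEq V]

/-- The vertices incident with at least one edge of an edge set. -/
def edgeVerts (E : Finset (Sym2 V)) : Finset V :=
  Finset.univ.filter fun v => ∃ e ∈ E, v ∈ e

/-- The degree of a vertex in the subgraph spanned by an edge set. -/
def deg (E : Finset (Sym2 V)) (v : V) : ℕ := (E.filter fun e => v ∈ e).card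

/-- The vertices covered by a collection of faces. -/
def facesVerts (H : Finset (Finset (Sym2 V))) : Finset V := edgeVerts (H.sup id)

/-- An edge set is a matching: non-loop edges, pairwise vertex-disjoint. -/
def IsMatching (M : Finset (Sym2 V)) : Prop :=
  (∀ e ∈ M, ¬e.IsDiag) ∧ ∀ e ∈ M, ∀ e' ∈ M, e ≠ e' → ∀ v : V, v ∈ e → v ∉ e'

/-- A fullerene graph: a cubic 3-connected plane graph with (exactly 12) pentagonal
faces and hexagonal faces. -/
structure IsFullerene (P : PlaneGraph V) : Prop where
  cubic : ∀ v : V, (P.graph.neighborSet v).ncard = 3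
  threeConnected : ∀ s : Set V, s.ncard ≤ 2 → (SimpleGraph.induce sᶜ P.graph).Connected
  faceSize : ∀ f ∈ P.faces, f.card = 5 ∨ f.card = 6
  pentTwelve : (P.faces.filter fun f => f.card = 5).card = 12

/-- A fragment of a plane graph: a nonempty set of faces (a cycle together with its
interior) whose boundary — the set of edges lying on exactly one chosen face — is a
single cycle. -/
structure Fragment (P : PlaneGraph V) : Type where
  inFaces : Finset (Finset (Sym2 V))
  nonempty : inFaces.Nonempty
  subFaces : inFaces ⊆ P.faces
  boundary_cycle : ∃ (v : V) (c : P.graph.Walk v v), c.IsCycle ∧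
    c.edges.toFinset =
      (inFaces.sup id).filter fun e => (inFaces.filter fun f => e ∈ f).card = 1

/-- The edge set of a fragment. -/
def Fragment.edges {P : PlaneGraph V} (B : Fragment P) : Finset (Sym2 V) := B.inFaces.sup id

/-- The boundary edges of a fragment. -/
def Fragment.boundary {P : PlaneGraph V} (B : Fragment P) : Finset (Sym2 V) :=
  B.edges.filter fun e => (B.inFaces.filter fun f => e ∈ f).card = 1

/-- A pentagonal fragment: all inner faces are pentagons. -/
def IsPentagonalFragment {P : PlaneGraph V} (B : Fragment P) : Prop :=
  ∀ f ∈ B.inFaces, f.card = 5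

/-- The faces of `P` adjoining the subgraph with edge set `E`: not a face of the
subgraph, but sharing at least one edge with it. -/
def adjoiningFaces (P : PlaneGraph V) (E : Finset (Sym2 V)) : Finset (Finset (Sym2 V)) :=
  P.faces.filter fun f => ¬f ⊆ E ∧ (f ∩ E).Nonempty

/-- The territory `T[G]` of the subgraph with edge set `E`: the subgraph together with
all adjoining faces. -/
def territoryEdges (P : PlaneGraph V) (E : Finset (Sym2 V)) : Finset (Sym2 V) :=
  E ∪ (adjoiningFaces P E).sup id

/-- `w(G)`: the number of 2-degree vertices of the subgraph spanned by `E`. -/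
def wcount (E : Finset (Sym2 V)) : ℕ := ((edgeVerts E).filter fun v => deg E v = 2).card

/-- A subgraph is maximal in `P` when its hexagon extension is contained in `P`,
i.e. every adjoining face is a hexagon. -/
def IsMaximalIn (P : PlaneGraph V) (E : Finset (Sym2 V)) : Prop :=
  ∀ f ∈ adjoiningFaces P E, f.card = 6

/-- `H ∈ 𝒮(G)` for the subgraph `G` with edge set `E`: `H` is a set of mutually disjoint
hexagons of the hexagon extension `H[G]` (hexagonal faces sharing at least one edge with
`G`) such that `G − H` has a matching covering all remaining 3-degree vertices of `G`. -/
def SextetAdm (P : PlaneGraph V) (E : Finset (Sym2 V)) (H : Finset (Finset (Sym2 V))) : Prop :=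
  (∀ f ∈ H, f ∈ P.faces ∧ f.card = 6 ∧ (f ∩ E).Nonempty) ∧
  (∀ f ∈ H, ∀ g ∈ H, f ≠ g → Disjoint (edgeVerts f) (edgeVerts g)) ∧
  ∃ M : Finset (Sym2 V), M ⊆ E ∧ IsMatching M ∧
    (∀ e ∈ M, ∀ v : V, v ∈ e → v ∉ facesVerts H) ∧
    ∀ v ∈ edgeVerts E, deg E v = 3 → v ∉ facesVerts H → ∃ e ∈ M, v ∈ e

/-- `U_H(G) = V(G) ∖ V(H)`. -/
def Uset (E : Finset (Sym2 V)) (H : Finset (Finset (Sym2 V))) : Finset V :=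
  edgeVerts E \ facesVerts H

/-- A Clar set of `H[G]`: a member of `𝒮(G)` minimizing `|U_H(G)|`. -/
def IsClarSet (P : PlaneGraph V) (E : Finset (Sym2 V)) (H : Finset (Finset (Sym2 V))) : Prop :=
  SextetAdm P E H ∧ ∀ H', SextetAdm P E H' → (Uset E H).card ≤ (Uset E H').card

/-- A normal Clar set: a Clar set such that `G − H` has a perfect matching. -/
def IsNormalClarSet (P : PlaneGraph V) (E : Finset (Sym2 V))
    (H : Finset (Finset (Sym2 V))) : Prop :=
  IsClarSet P E H ∧ ∃ M : Finset (Sym2 V), M ⊆ E ∧ IsMatching M ∧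
    (∀ e ∈ M, ∀ v : V, v ∈ e → v ∉ facesVerts H) ∧
    ∀ v ∈ Uset E H, ∃ e ∈ M, v ∈ e

/-- The pentagonal faces of the subgraph with edge set `E`. -/
def pentFaces (P : PlaneGraph V) (E : Finset (Sym2 V)) : Finset (Finset (Sym2 V)) :=
  P.faces.filter fun f => f.card = 5 ∧ f ⊆ E

/-- A subgraph with `k` pentagons is extremal if `|U_H(G)| = k` for a Clar set `H`. -/
def IsExtremalSub (P : PlaneGraph V) (E : Finset (Sym2 V)) : Prop :=
  ∃ H, IsClarSet P E H ∧ (Uset E H).card = (pentFaces P E).card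

/-- A pentagonal ring `R_k`: `k` pentagonal faces `R 0, …, R (k-1)` such that
`R i` and `R j` intersect iff `|i − j| = 1 (mod k)`. -/
def IsPentRing (P : PlaneGraph V) (k : ℕ) (R : ZMod k → Finset (Sym2 V)) : Prop :=
  Function.Injective R ∧ (∀ i, R i ∈ P.faces ∧ (R i).card = 5) ∧
  ∀ i j : ZMod k, i ≠ j →
    ((edgeVerts (R i) ∩ edgeVerts (R j)).Nonempty ↔ (j = i + 1 ∨ i = j + 1))

/-- The number of pentagons of the pentagonal fragment `B` adjoining (sharing an edge
with) the pentagon `p`. -/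
def pentAdjCount {P : PlaneGraph V} (B : Fragment P) (p : Finset (Sym2 V)) : ℕ :=
  (B.inFaces.filter fun q => q ≠ p ∧ (q ∩ p).Nonempty).card

/-- The fragment consisting of a single pentagon `P`. -/
def IsPentagonFrag {P : PlaneGraph V} (B : Fragment P) : Prop :=
  IsPentagonalFragment B ∧ B.inFaces.card = 1

/-- `B_2`: the extremal pentagonal fragment with 4 pentagons whose Clar extension is
normal. -/
def IsB2Frag {P : PlaneGraph V} (B : Fragment P) : Prop :=
  IsPentagonalFragment B ∧ B.inFaces.card = 4 ∧ IsExtremalSub P B.edges ∧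
    ∃ H, IsNormalClarSet P B.edges H

/-- `B_3`: the extremal pentagonal fragment with 6 pentagons whose Clar extension is
normal. -/
def IsB3Frag {P : PlaneGraph V} (B : Fragment P) : Prop :=
  IsPentagonalFragment B ∧ B.inFaces.card = 6 ∧ IsExtremalSub P B.edges ∧
    ∃ H, IsNormalClarSet P B.edges H

/-- A pasting edge of the subgraph with edge set `E`: an edge of `E` lying on the
boundary of the Clar extension `C[G]` (not an edge of a Clar hexagon) whose two
end-vertices belong to `V(H)` for a Clar set `H`. -/
def IsPastingEdge (P : PlaneGraph V) (E : Finset (Sym2 V)) (e : Sym2 V) : Prop :=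
  e ∈ E ∧ ∃ H, IsClarSet P E H ∧ (∀ v : V, v ∈ e → v ∈ facesVerts H) ∧ e ∉ H.sup id

/-- `B` arises from pasting `A` and `C` along a common pasting edge:
`B = A ∪ C` and `A ∩ C` is a single pasting edge of both. -/
def IsPasting {P : PlaneGraph V} (B A C : Fragment P) : Prop :=
  B.inFaces = A.inFaces ∪ C.inFaces ∧
  ∃ e : Sym2 V, A.edges ∩ C.edges = {e} ∧ IsPastingEdge P A.edges e ∧ IsPastingEdge P C.edges e

def IsBasicFrag {P : PlaneGraph V} (B : Fragment P) : Prop :=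
  IsPentagonFrag B ∨ IsB2Frag B ∨ IsB3Frag B

/-- The pentagonal fragments generated from `P`, `B_2`, `B_3` by the pasting operation. -/
inductive Pasted (P : PlaneGraph V) : Fragment P → Prop
  | base (B : Fragment P) : IsBasicFrag B → Pasted P B
  | paste (B A C : Fragment P) : Pasted P A → IsBasicFrag C → IsPasting B A C → Pasted P B

/-- `P ∗ P`. -/
def IsPPFrag {P : PlaneGraph V} (B : Fragment P) : Prop :=
  ∃ A C : Fragment P, IsPentagonFrag A ∧ IsPentagonFrag C ∧ IsPasting B A C

/-- `P ∗ B_2`. -/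
def IsPB2Frag {P : PlaneGraph V} (B : Fragment P) : Prop :=
  ∃ A C : Fragment P, IsPentagonFrag A ∧ IsB2Frag C ∧ IsPasting B A C

/-- `P ∗ B_2 ∗ P`. -/
def IsPB2PFrag {P : PlaneGraph V} (B : Fragment P) : Prop :=
  ∃ B' A C D : Fragment P, IsPentagonFrag A ∧ IsB2Frag C ∧ IsPentagonFrag D ∧
    IsPasting B' A C ∧ IsPasting B B' D

/-- The six members of `𝓑_{≥60}`. -/
def SixShapes {P : PlaneGraph V} (B : Fragment P) : Prop :=
  IsPentagonFrag B ∨ IsB2Frag B ∨ IsB3Frag B ∨ IsPPFrag B ∨ IsPB2Frag B ∨ IsPB2PFrag B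

/-- `B_1`: two vertex-disjoint pentagons joined by an edge. -/
def IsB1 (P : PlaneGraph V) (E : Finset (Sym2 V)) : Prop :=
  ∃ (f g : Finset (Sym2 V)) (a b : V), f ∈ P.faces ∧ g ∈ P.faces ∧ f.card = 5 ∧ g.card = 5 ∧
    Disjoint (edgeVerts f) (edgeVerts g) ∧ P.graph.Adj a b ∧
    a ∈ edgeVerts f ∧ b ∈ edgeVerts g ∧ E = f ∪ g ∪ {s(a, b)}

/-- `B_1^k`: `k` copies of `B_1` pasted together along pasting edges of their pentagons. -/
inductive B1Pow (P : PlaneGraph V) : ℕ → Finset (Sym2 V) → Prop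
  | one (E : Finset (Sym2 V)) : IsB1 P E → B1Pow P 1 E
  | succ (k : ℕ) (E X : Finset (Sym2 V)) (e : Sym2 V) (f g : Finset (Sym2 V)) :
      B1Pow P k E → IsB1 P X → E ∩ X = {e} → f ∈ P.faces → g ∈ P.faces →
      f.card = 5 → g.card = 5 → f ⊆ E → g ⊆ X → e ∈ f → e ∈ g →
      IsPastingEdge P f e → IsPastingEdge P g e → B1Pow P (k + 1) (E ∪ X)

/-- `F` contains `B_1^k` for some `2 ≤ k ≤ 4` as a subgraph. -/
def ContainsB1Pow (P : PlaneGraph V) : Prop :=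
  ∃ (k : ℕ) (E : Finset (Sym2 V)), 2 ≤ k ∧ k ≤ 4 ∧ B1Pow P k E

/-- A perfect matching of the plane graph `P`. -/
def IsPerfectMatching (P : PlaneGraph V) (M : Finset (Sym2 V)) : Prop :=
  (∀ e ∈ M, e ∈ P.graph.edgeSet) ∧ IsMatching M ∧ ∀ v : V, ∃ e ∈ M, v ∈ e

/-- A sextet pattern of `P`: mutually disjoint hexagonal faces, all alternating with
respect to a common perfect matching. -/
def IsSextetPattern (P : PlaneGraph V) (H : Finset (Finset (Sym2 V))) : Prop :=
  (∀ f ∈ H, f ∈ P.faces ∧ f.card = 6) ∧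
  (∀ f ∈ H, ∀ g ∈ H, f ≠ g → Disjoint (edgeVerts f) (edgeVerts g)) ∧
  ∃ M : Finset (Sym2 V), IsPerfectMatching P M ∧ ∀ f ∈ H, (f ∩ M).card = 3

/-- A Clar formula: a maximum sextet pattern. -/
def IsClarFormula (P : PlaneGraph V) (H : Finset (Finset (Sym2 V))) : Prop :=
  IsSextetPattern P H ∧ ∀ H', IsSextetPattern P H' → H'.card ≤ H.card

/-- An extremal fullerene graph: the Clar number equals `(n − 12)/6`. -/
def IsExtremalFullerene (P : PlaneGraph V) : Prop :=
  ∃ H, IsClarFormula P H ∧ 6 * H.card = Fintype.card V - 12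

/-- The edges of the union of all maximal pentagonal fragments of `P`. -/
noncomputable def maxPentEdges (P : PlaneGraph V) : Finset (Sym2 V) :=
  @Finset.filter _
    (fun e => ∃ B : Fragment P, IsPentagonalFragment B ∧ IsMaximalIn P B.edges ∧ e ∈ B.edges)
    (Classical.decPred _) (P.faces.sup id)

/-- The disjoint union of two copies of `K_2`. -/
def twoK2 : SimpleGraph (Fin 4) := SimpleGraph.fromEdgeSet {s(0, 1), s(2, 3)}

/-- The tree `T_0` on six vertices: two adjacent 3-degree vertices, each also adjacent
to two leaves. -/
def treeT0 : SimpleGraph (Fin 6) :=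
  SimpleGraph.fromEdgeSet {s(0, 1), s(0, 2), s(0, 3), s(1, 4), s(1, 5)}

end FG

/-! Faces of a cubic plane graph meet in a matching, so a pentagon shares an even number of
vertices with each hexagon of `H`; as these hexagons are disjoint, a pentagon `f` of `G` has an
odd number of vertices in `U_H(G)`. Hence `f` has a vertex `w ∈ U_H(G)` that either has degree
at most two in `G`, so that `f` is the only face of `G` through `w`, or is covered by the
matching `M` of `G − H` through an edge `e ∉ f`, so that `f` is the only face at `w` avoiding
`e`. Either way `w` determines `f`, and the pentagons of `G` inject into `U_H(G)`. -/

lemma Finset.card_inter_eq_one_of_card_eq_two {α : Type*} [DecidableEq α] {A B T : Finset α}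
    (hA : A ⊆ T) (hB : B ⊆ T) (hT : T.card = 3) (hA2 : A.card = 2) (hB2 : B.card = 2)
    (hne : A ≠ B) : (A ∩ B).card = 1 := by
  have hunion : (A ∪ B).card ≤ 3 := hT ▸ Finset.card_le_card (Finset.union_subset hA hB)
  have hsum := Finset.card_union_add_card_inter A B
  have hle := Finset.card_le_card (Finset.inter_subset_left (s₁ := A) (s₂ := B))
  have hAB : (A ∩ B).card ≠ 2 := fun h2 ↦ hne <|
    (Finset.eq_of_subset_of_card_le Finset.inter_subset_left (by omega)).symm.trans
      (Finset.eq_of_subset_of_card_le Finset.inter_subset_right (by omega))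
  omega

namespace FG

section

variable {V : Type} [DecidableEq V]

lemma deg_mono {E F : Finset (Sym2 V)} (h : E ⊆ F) (v : V) : deg E v ≤ deg F v :=
  Finset.card_le_card (Finset.filter_subset_filter _ h)

lemma deg_eq_ncard (E : Finset (Sym2 V)) (v : V) : deg E v = {w | s(v, w) ∈ E}.ncard := by
  rw [deg, ← Set.ncard_coe_finset]
  symm
  refine Set.ncard_congr (fun w _ ↦ s(v, w)) (fun w hw ↦ by simpa using hw)
    (fun _ _ _ _ h ↦ Sym2.congr_right.mp h) ?_
  intro e he
  obtain ⟨heE, hve⟩ := Finset.mem_filter.mp he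
  exact ⟨Sym2.Mem.other hve, by simpa [Sym2.other_spec hve] using heE, Sym2.other_spec hve⟩

end

lemma IsMatching.subset {V : Type} {M N : Finset (Sym2 V)} (hM : IsMatching M) (h : N ⊆ M) :
    IsMatching N :=
  ⟨fun e he ↦ hM.1 e (h he), fun e he e' he' ↦ hM.2 e (h he) e' (h he')⟩

section

variable {V : Type} [Fintype V] [DecidableEq V]

lemma mem_edgeVerts {E : Finset (Sym2 V)} {v : V} : v ∈ edgeVerts E ↔ ∃ e ∈ E, v ∈ e := by
  simp [edgeVerts]

lemma edgeVerts_mono {E F : Finset (Sym2 V)} (h : E ⊆ F) : edgeVerts E ⊆ edgeVerts F :=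
  fun _ hv ↦ have ⟨e, he, hve⟩ := mem_edgeVerts.mp hv; mem_edgeVerts.mpr ⟨e, h he, hve⟩

lemma mem_facesVerts {H : Finset (Finset (Sym2 V))} {v : V} :
    v ∈ facesVerts H ↔ ∃ h ∈ H, v ∈ edgeVerts h := by
  simp only [facesVerts, mem_edgeVerts, Finset.mem_sup, id]
  grind

lemma deg_pos_iff {E : Finset (Sym2 V)} {v : V} : 0 < deg E v ↔ v ∈ edgeVerts E := by
  simp [deg, Finset.card_pos, Finset.filter_nonempty_iff, mem_edgeVerts]

lemma sum_deg {S : Finset (Sym2 V)} (hS : ∀ e ∈ S, ¬e.IsDiag) :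
    ∑ v ∈ edgeVerts S, deg S v = 2 * S.card := by
  have hends : ∀ e ∈ S, (edgeVerts S).filter (· ∈ e) = e.toFinset := fun e he ↦ by
    ext v
    simpa [Sym2.mem_toFinset] using fun hve ↦ mem_edgeVerts.mpr ⟨e, he, hve⟩
  calc ∑ v ∈ edgeVerts S, deg S v
      = ∑ e ∈ S, ((edgeVerts S).filter (· ∈ e)).card :=
        Finset.sum_card_bipartiteAbove_eq_sum_card_bipartiteBelow (fun v e ↦ v ∈ e)
    _ = ∑ e ∈ S, 2 := Finset.sum_congr rfl fun e he ↦ by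
        rw [hends e he, Sym2.card_toFinset_of_not_isDiag e (hS e he)]
    _ = 2 * S.card := by rw [Finset.sum_const, smul_eq_mul, mul_comm]

lemma card_edgeVerts_of_deg_eq {S : Finset (Sym2 V)} (hS : ∀ e ∈ S, ¬e.IsDiag) {d : ℕ}
    (hd : ∀ v ∈ edgeVerts S, deg S v = d) : d * (edgeVerts S).card = 2 * S.card := by
  rw [← sum_deg hS, Finset.sum_congr rfl hd, Finset.sum_const, smul_eq_mul, mul_comm]

lemma IsMatching.card_edgeVerts {M : Finset (Sym2 V)} (hM : IsMatching M) :
    (edgeVerts M).card = 2 * M.card := by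
  have hdeg : ∀ v ∈ edgeVerts M, deg M v = 1 := by
    intro v hv
    refine le_antisymm (Finset.card_le_one.mpr fun a ha b hb ↦ ?_) (deg_pos_iff.mpr hv)
    by_contra hab
    exact hM.2 a (Finset.mem_filter.mp ha).1 b (Finset.mem_filter.mp hb).1 hab v
      (Finset.mem_filter.mp ha).2 (Finset.mem_filter.mp hb).2
  simpa using card_edgeVerts_of_deg_eq hM.1 hdeg

lemma IsMatching.exists_mem_notMem_of_odd {M : Finset (Sym2 V)} (hM : IsMatching M)
    {X : Finset V} (hX : Odd X.card) (hcover : ∀ v ∈ X, ∃ e ∈ M, v ∈ e) :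
    ∃ e ∈ M, ∃ v ∈ e, v ∈ X ∧ ∃ u ∈ e, u ∉ X := by
  classical
  by_contra! hclosed
  have hXM : X = edgeVerts (M.filter fun e ↦ ∀ u ∈ e, u ∈ X) := by
    ext v
    simp only [mem_edgeVerts, Finset.mem_filter]
    constructor
    · intro hv
      obtain ⟨e, heM, hve⟩ := hcover v hv
      exact ⟨e, ⟨heM, hclosed e heM v hve hv⟩, hve⟩
    · rintro ⟨e, ⟨-, he⟩, hve⟩
      exact he v hve
  rw [hXM, (hM.subset (Finset.filter_subset _ _)).card_edgeVerts] at hX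
  exact Nat.not_odd_iff_even.mpr (even_two_mul _) hX

namespace PlaneGraph

variable (P : PlaneGraph V)

lemma not_isDiag_of_mem_face {f : Finset (Sym2 V)} (hf : f ∈ P.faces) {e : Sym2 V}
    (he : e ∈ f) : ¬e.IsDiag :=
  P.graph.not_isDiag_of_mem_edgeSet (P.face_edges f hf e he)

lemma deg_face {f : Finset (Sym2 V)} (hf : f ∈ P.faces) {v : V} (hv : v ∈ edgeVerts f) :
    deg f v = 2 := by
  obtain ⟨u, c, hc, rfl⟩ := P.face_cycle f hf
  obtain ⟨e, he, hve⟩ := mem_edgeVerts.mp hv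
  rw [deg_eq_ncard, ← hc.ncard_neighborSet_toSubgraph_eq_two
    (SimpleGraph.Walk.mem_support_of_mem_edges (List.mem_toFinset.mp he) hve)]
  congr 1
  ext w
  simp [SimpleGraph.Walk.adj_toSubgraph_iff_mem_edges]

lemma card_edgeVerts_face {f : Finset (Sym2 V)} (hf : f ∈ P.faces) :
    (edgeVerts f).card = f.card := by
  have := card_edgeVerts_of_deg_eq (fun e he ↦ P.not_isDiag_of_mem_face hf he)
    fun v hv ↦ P.deg_face hf hv
  omega

lemma deg_edgeFinset [DecidableRel P.graph.Adj]
    (hcubic : ∀ v, (P.graph.neighborSet v).ncard = 3) (v : V) :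
    deg P.graph.edgeFinset v = 3 := by
  rw [deg_eq_ncard, ← hcubic v]
  congr 1
  ext w
  simp

lemma deg_le_three (hcubic : ∀ v, (P.graph.neighborSet v).ncard = 3)
    {S : Finset (Sym2 V)} (hS : ∀ e ∈ S, e ∈ P.graph.edgeSet) (v : V) : deg S v ≤ 3 := by
  classical
  exact (deg_mono (fun e he ↦ P.graph.mem_edgeFinset.mpr (hS e he)) v).trans
    (P.deg_edgeFinset hcubic v).le

lemma card_faces_incident (hcubic : ∀ v, (P.graph.neighborSet v).ncard = 3) (v : V) :
    (P.faces.filter (v ∈ edgeVerts ·)).card = 3 := by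
  classical
  set T := P.graph.edgeFinset.filter (v ∈ ·)
  have hsum : ∑ f ∈ P.faces, deg f v = 2 * 3 := calc
    ∑ f ∈ P.faces, deg f v = ∑ f ∈ P.faces, (T.filter (· ∈ f)).card :=
        Finset.sum_congr rfl fun f hf ↦ congrArg Finset.card <| by
          ext e
          have := P.face_edges f hf e
          simp only [T, Finset.mem_filter, SimpleGraph.mem_edgeFinset]
          tauto
    _ = ∑ e ∈ T, (P.faces.filter (e ∈ ·)).card :=
        Finset.sum_card_bipartiteAbove_eq_sum_card_bipartiteBelow (fun f e ↦ e ∈ f)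
    _ = ∑ e ∈ T, 2 := Finset.sum_congr rfl fun e he ↦
        P.edge_faces e (P.graph.mem_edgeFinset.mp (Finset.mem_filter.mp he).1)
    _ = 2 * 3 := by
        rw [Finset.sum_const, smul_eq_mul, mul_comm, ← P.deg_edgeFinset hcubic v]
        rfl
  have hface : ∑ f ∈ P.faces, deg f v = ∑ f ∈ P.faces.filter (v ∈ edgeVerts ·), 2 := by
    rw [Finset.sum_filter]
    refine Finset.sum_congr rfl fun f hf ↦ ?_
    split_ifs with hv
    · exact P.deg_face hf hv
    · exact Nat.eq_zero_of_not_pos (mt deg_pos_iff.mp hv)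
  rw [hface, Finset.sum_const, smul_eq_mul] at hsum
  omega

lemma face_eq_of_notMem (hcubic : ∀ v, (P.graph.neighborSet v).ncard = 3)
    {f g : Finset (Sym2 V)} (hf : f ∈ P.faces) (hg : g ∈ P.faces) {v : V}
    (hvf : v ∈ edgeVerts f) (hvg : v ∈ edgeVerts g) {e : Sym2 V} (he : e ∈ P.graph.edgeSet)
    (hve : v ∈ e) (hef : e ∉ f) (heg : e ∉ g) : f = g := by
  classical
  -- three faces meet at `v`, and two of them contain `e`
  have hsub : P.faces.filter (e ∈ ·) ⊆ P.faces.filter (v ∈ edgeVerts ·) := fun h hh ↦ by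
    obtain ⟨hh, heh⟩ := Finset.mem_filter.mp hh
    exact Finset.mem_filter.mpr ⟨hh, mem_edgeVerts.mpr ⟨e, heh, hve⟩⟩
  have hone : (P.faces.filter (v ∈ edgeVerts ·) \ P.faces.filter (e ∈ ·)).card ≤ 1 := by
    rw [Finset.card_sdiff_of_subset hsub, P.card_faces_incident hcubic v, P.edge_faces e he]
  have hmem : ∀ h ∈ P.faces, v ∈ edgeVerts h → e ∉ h →
      h ∈ P.faces.filter (v ∈ edgeVerts ·) \ P.faces.filter (e ∈ ·) := fun h hh hvh heh ↦
    Finset.mem_sdiff.mpr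
      ⟨Finset.mem_filter.mpr ⟨hh, hvh⟩, fun h' ↦ heh (Finset.mem_filter.mp h').2⟩
  exact Finset.card_le_one.mp hone f (hmem f hf hvf hef) g (hmem g hg hvg heg)

lemma exists_edge_notMem_face (hcubic : ∀ v, (P.graph.neighborSet v).ncard = 3)
    {f : Finset (Sym2 V)} (hf : f ∈ P.faces) {v : V} (hv : v ∈ edgeVerts f) :
    ∃ e ∈ P.graph.edgeSet, v ∈ e ∧ e ∉ f := by
  classical
  have hlt : deg f v < deg P.graph.edgeFinset v := by
    rw [P.deg_face hf hv, P.deg_edgeFinset hcubic v]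
    norm_num
  obtain ⟨e, he, hef⟩ := Finset.exists_mem_notMem_of_card_lt_card hlt
  obtain ⟨heG, hve⟩ := Finset.mem_filter.mp he
  exact ⟨e, P.graph.mem_edgeFinset.mp heG, hve,
    fun h ↦ hef (Finset.mem_filter.mpr ⟨h, hve⟩)⟩

lemma face_eq_of_filter_eq (hcubic : ∀ v, (P.graph.neighborSet v).ncard = 3)
    {f g : Finset (Sym2 V)} (hf : f ∈ P.faces) (hg : g ∈ P.faces) {v : V}
    (hvf : v ∈ edgeVerts f) (hvg : v ∈ edgeVerts g)
    (h : f.filter (v ∈ ·) = g.filter (v ∈ ·)) : f = g := by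
  obtain ⟨e, he, hve, hef⟩ := P.exists_edge_notMem_face hcubic hf hvf
  refine P.face_eq_of_notMem hcubic hf hg hvf hvg he hve hef fun heg ↦ hef ?_
  have : e ∈ f.filter (v ∈ ·) := h ▸ Finset.mem_filter.mpr ⟨heg, hve⟩
  exact (Finset.mem_filter.mp this).1

lemma deg_inter_eq_one (hcubic : ∀ v, (P.graph.neighborSet v).ncard = 3)
    {f g : Finset (Sym2 V)} (hf : f ∈ P.faces) (hg : g ∈ P.faces) (hne : f ≠ g) {v : V}
    (hvf : v ∈ edgeVerts f) (hvg : v ∈ edgeVerts g) : deg (f ∩ g) v = 1 := by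
  classical
  have hsub : ∀ h ∈ P.faces, h.filter (v ∈ ·) ⊆ P.graph.edgeFinset.filter (v ∈ ·) :=
    fun h hh ↦ Finset.filter_subset_filter _ fun e he ↦
      P.graph.mem_edgeFinset.mpr (P.face_edges h hh e he)
  rw [deg, Finset.filter_inter_distrib]
  exact Finset.card_inter_eq_one_of_card_eq_two (hsub f hf) (hsub g hg)
    (P.deg_edgeFinset hcubic v) (P.deg_face hf hvf) (P.deg_face hg hvg)
    fun h ↦ hne (P.face_eq_of_filter_eq hcubic hf hg hvf hvg h)

lemma edgeVerts_inter_faces (hcubic : ∀ v, (P.graph.neighborSet v).ncard = 3)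
    {f g : Finset (Sym2 V)} (hf : f ∈ P.faces) (hg : g ∈ P.faces) (hne : f ≠ g) :
    edgeVerts f ∩ edgeVerts g = edgeVerts (f ∩ g) := by
  ext v
  refine ⟨fun hv ↦ ?_, fun hv ↦ Finset.mem_inter.mpr
    ⟨edgeVerts_mono Finset.inter_subset_left hv, edgeVerts_mono Finset.inter_subset_right hv⟩⟩
  obtain ⟨hvf, hvg⟩ := Finset.mem_inter.mp hv
  exact deg_pos_iff.mp (P.deg_inter_eq_one hcubic hf hg hne hvf hvg ▸ one_pos)

lemma card_edgeVerts_inter_faces (hcubic : ∀ v, (P.graph.neighborSet v).ncard = 3)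
    {f g : Finset (Sym2 V)} (hf : f ∈ P.faces) (hg : g ∈ P.faces) (hne : f ≠ g) :
    (edgeVerts f ∩ edgeVerts g).card = 2 * (f ∩ g).card := by
  rw [P.edgeVerts_inter_faces hcubic hf hg hne]
  simpa using card_edgeVerts_of_deg_eq (d := 1)
    (fun e he ↦ P.not_isDiag_of_mem_face hf (Finset.mem_inter.mp he).1) fun v hv ↦
      P.deg_inter_eq_one hcubic hf hg hne (edgeVerts_mono Finset.inter_subset_left hv)
        (edgeVerts_mono Finset.inter_subset_right hv)

lemma odd_card_edgeVerts_sdiff_facesVerts (hcubic : ∀ v, (P.graph.neighborSet v).ncard = 3)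
    {f : Finset (Sym2 V)} (hf : f ∈ P.faces) (hodd : Odd f.card)
    {H : Finset (Finset (Sym2 V))} (hHf : ∀ h ∈ H, h ∈ P.faces) (hfH : f ∉ H)
    (hdisj : ∀ h ∈ H, ∀ h' ∈ H, h ≠ h' → Disjoint (edgeVerts h) (edgeVerts h')) :
    Odd (edgeVerts f \ facesVerts H).card := by
  have hinter : edgeVerts f ∩ facesVerts H = H.biUnion (edgeVerts f ∩ edgeVerts ·) := by
    ext v
    simp only [Finset.mem_inter, mem_facesVerts, Finset.mem_biUnion]
    grind
  have heven : Even (edgeVerts f ∩ facesVerts H).card := by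
    rw [hinter, Finset.card_biUnion fun h hh h' hh' hne ↦
      (hdisj h hh h' hh' hne).mono Finset.inter_subset_right Finset.inter_subset_right]
    refine Finset.even_sum _ fun h hh ↦ ?_
    rw [P.card_edgeVerts_inter_faces hcubic hf (hHf h hh) (ne_of_mem_of_not_mem hh hfH).symm]
    exact even_two_mul _
  have hsplit := Finset.card_sdiff_add_card_inter (edgeVerts f) (facesVerts H)
  rw [P.card_edgeVerts_face hf] at hsplit
  rw [Nat.odd_iff] at hodd ⊢
  rw [Nat.even_iff] at heven
  omega

lemma face_eq_of_deg_le_two (hcubic : ∀ v, (P.graph.neighborSet v).ncard = 3)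
    {E f g : Finset (Sym2 V)} (hf : f ∈ P.faces) (hg : g ∈ P.faces) (hfE : f ⊆ E) (hgE : g ⊆ E)
    {w : V} (hwf : w ∈ edgeVerts f) (hwg : w ∈ edgeVerts g) (hw : deg E w ≤ 2) : f = g := by
  have hfilter : ∀ h ∈ P.faces, h ⊆ E → w ∈ edgeVerts h → h.filter (w ∈ ·) = E.filter (w ∈ ·) :=
    fun h hh hhE hwh ↦ Finset.eq_of_subset_of_card_le (Finset.filter_subset_filter _ hhE)
      (hw.trans (P.deg_face hh hwh).ge)
  exact P.face_eq_of_filter_eq hcubic hf hg hwf hwg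
    ((hfilter f hf hfE hwf).trans (hfilter g hg hgE hwg).symm)

end PlaneGraph

def IsAnchor (P : PlaneGraph V) (E M f : Finset (Sym2 V)) (w : V) : Prop :=
  w ∈ edgeVerts f ∧
    ((∀ g ∈ P.faces, g ⊆ E → w ∈ edgeVerts g → g = f) ∨ ∃ e ∈ M, w ∈ e ∧ e ∉ f)

lemma IsAnchor.eq {P : PlaneGraph V} (hcubic : ∀ v, (P.graph.neighborSet v).ncard = 3)
    {E M f g : Finset (Sym2 V)} (hE : ∀ e ∈ E, e ∈ P.graph.edgeSet) (hME : M ⊆ E)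
    (hM : IsMatching M) (hf : f ∈ P.faces) (hg : g ∈ P.faces) (hfE : f ⊆ E) (hgE : g ⊆ E)
    {w : V} (hwf : IsAnchor P E M f w) (hwg : IsAnchor P E M g w) : f = g := by
  obtain ⟨hwf, hfonly | ⟨e, heM, hwe, hef⟩⟩ := hwf
  · exact (hfonly g hg hgE hwg.1).symm
  obtain ⟨hwg, hgonly | ⟨e', he'M, hwe', heg⟩⟩ := hwg
  · exact hgonly f hf hfE hwf
  obtain rfl : e = e' := by_contra fun hne ↦ hM.2 e heM e' he'M hne w hwe hwe'
  exact P.face_eq_of_notMem hcubic hf hg hwf hwg (hE e (hME heM)) hwe hef heg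

lemma exists_anchor {P : PlaneGraph V} (hcubic : ∀ v, (P.graph.neighborSet v).ncard = 3)
    {E f : Finset (Sym2 V)} (hE : ∀ e ∈ E, e ∈ P.graph.edgeSet) (hf : f ∈ P.faces)
    (hfE : f ⊆ E) (hodd : Odd f.card) {H : Finset (Finset (Sym2 V))}
    (hHf : ∀ h ∈ H, h ∈ P.faces) (hfH : f ∉ H)
    (hdisj : ∀ h ∈ H, ∀ h' ∈ H, h ≠ h' → Disjoint (edgeVerts h) (edgeVerts h'))
    {M : Finset (Sym2 V)} (hM : IsMatching M)
    (hMavoid : ∀ e ∈ M, ∀ v : V, v ∈ e → v ∉ facesVerts H)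
    (hMcover : ∀ v ∈ edgeVerts E, deg E v = 3 → v ∉ facesVerts H → ∃ e ∈ M, v ∈ e) :
    ∃ w ∈ Uset E H, IsAnchor P E M f w := by
  set X := edgeVerts f \ facesVerts H
  have hXU : X ⊆ Uset E H := Finset.sdiff_subset_sdiff (edgeVerts_mono hfE) le_rfl
  by_cases! hlow : ∃ w ∈ X, deg E w ≤ 2
  · obtain ⟨w, hwX, hw⟩ := hlow
    have hwf := (Finset.mem_sdiff.mp hwX).1
    exact ⟨w, hXU hwX, hwf, Or.inl fun g hg hgE hwg ↦
      P.face_eq_of_deg_le_two hcubic hg hf hgE hfE hwg hwf hw⟩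
  have hcover : ∀ v ∈ X, ∃ e ∈ M, v ∈ e := fun v hv ↦
    hMcover v (edgeVerts_mono hfE (Finset.mem_sdiff.mp hv).1)
      (le_antisymm (P.deg_le_three hcubic hE v) (hlow v hv)) (Finset.mem_sdiff.mp hv).2
  obtain ⟨e, heM, w, hwe, hwX, u, hue, huX⟩ :=
    hM.exists_mem_notMem_of_odd (P.odd_card_edgeVerts_sdiff_facesVerts hcubic hf hodd hHf hfH
      hdisj) hcover
  refine ⟨w, hXU hwX, (Finset.mem_sdiff.mp hwX).1, Or.inr ⟨e, heM, hwe, fun hef ↦ huX ?_⟩⟩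
  exact Finset.mem_sdiff.mpr ⟨mem_edgeVerts.mpr ⟨e, hef, hue⟩, hMavoid e heM u hue⟩

/-- Lemma 2.7. Let `G` be a subgraph of a fullerene graph `F` with `k`
pentagonal faces and let `H` be a Clar set of the hexagon extension `H[G]`. Then
`|U_H(G)| ≥ k`. -/
theorem statement_3 (P : PlaneGraph V) (hP : IsFullerene P) (E : Finset (Sym2 V))
    (hE : ∀ e ∈ E, e ∈ P.graph.edgeSet)
    (H : Finset (Finset (Sym2 V))) (hH : IsClarSet P E H) :
    (pentFaces P E).card ≤ (Uset E H).card := by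
  obtain ⟨⟨hHhex, hdisj, M, hME, hM, hMavoid, hMcover⟩, -⟩ := hH
  have hpent : ∀ f ∈ pentFaces P E, f ∈ P.faces ∧ f.card = 5 ∧ f ⊆ E :=
    fun f hf ↦ Finset.mem_filter.mp hf
  refine Finset.card_le_card_of_forall_subsingleton (IsAnchor P E M) (fun f hf ↦ ?_)
    fun w _ f hf g hg ↦ ?_
  · obtain ⟨hfF, hf5, hfE⟩ := hpent f hf
    have hfH : f ∉ H := fun hfH ↦ by
      have := (hHhex f hfH).2.1
      omega
    exact exists_anchor hP.cubic hE hfF hfE (hf5 ▸ by decide) (fun h hh ↦ (hHhex h hh).1) hfH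
      hdisj hM hMavoid hMcover
  · obtain ⟨hfF, -, hfE⟩ := hpent f hf.1
    obtain ⟨hgF, -, hgE⟩ := hpent g hg.1
    exact hf.2.eq hP.cubic hE hME hM hfF hgF hfE hgE hg.2

end

end FG
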